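/- Let P_1, P_2, P be finite posets. There is a bijection between: (a) the set of triples (I, φ_1, φ_2) where I is an ideal (up-set) of P, φ_1 is an order isomorphism from P_1 to the restriction of P to V(P) \ I, and φ_2 is an order isomorphism from P_2 to the restriction of P to I; and (b) the set of pairs (Θ, φ) where Θ is a system of edges from P_1 to P_2 and φ is an order isomorphism from P_1 ⊔_Θ P_2 to P. -/

import Mathlib

/-- The order glued from `P₁`, `P₂` and a system of edges `Θ`. -/
def gluedLE {P₁ P₂ : Type*} [PartialOrder P₁] [PartialOrder P₂] (Θ : P₁ → Set P₂) :
    P₁ ⊕ P₂ → P₁ ⊕ P₂ → Prop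
  | .inl x, .inl y => x ≤ y
  | .inr x, .inr y => x ≤ y
  | .inl x, .inr y => ∃ x' : P₁, ∃ y' ∈ Θ x', x ≤ x' ∧ y' ≤ y
  | .inr _, .inl _ => False

/-- A decomposition of `P` as complement of an ideal plus the ideal,
isomorphic to `P₁` and `P₂` respectively. -/
structure IdealDecomp (P₁ P₂ P : Type*)
    [PartialOrder P₁] [PartialOrder P₂] [PartialOrder P] where
  I : Set P
  ideal : ∀ ⦃a b : P⦄, a ∈ I → a ≤ b → b ∈ I
  φ₁ : P₁ ≃ {p : P // p ∉ I}
  mono₁ : ∀ a b : P₁, a ≤ b ↔ (φ₁ a : P) ≤ (φ₁ b : P)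
  φ₂ : P₂ ≃ {p : P // p ∈ I}
  mono₂ : ∀ a b : P₂, a ≤ b ↔ (φ₂ a : P) ≤ (φ₂ b : P)

/-- A system of edges from `P₁` to `P₂` together with an isomorphism
from the glued poset `P₁ ⊔_Θ P₂` to `P`. -/
structure EdgeGluing (P₁ P₂ P : Type*)
    [PartialOrder P₁] [PartialOrder P₂] [PartialOrder P] where
  Θ : P₁ → Set P₂
  cond1 : ∀ x y : P₁, x < y → ∀ x' ∈ Θ x, ∀ y' ∈ Θ y, ¬ y' ≤ x'
  cond2 : ∀ x : P₁, ∀ x' ∈ Θ x, ∀ x'' ∈ Θ x, (x' ≤ x'' ↔ x' = x'')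
  φ : P₁ ⊕ P₂ ≃ P
  mono : ∀ a b : P₁ ⊕ P₂, gluedLE Θ a b ↔ φ a ≤ φ b

set_option linter.unusedSectionVars false

namespace IdealEdgeAux

variable {P₁ P₂ P : Type*} [PartialOrder P₁] [PartialOrder P₂] [PartialOrder P]

theorem IdealDecomp.ext' {d e : IdealDecomp P₁ P₂ P} (hI : d.I = e.I)
    (h1 : ∀ x, (d.φ₁ x : P) = e.φ₁ x) (h2 : ∀ y, (d.φ₂ y : P) = e.φ₂ y) : d = e := by
  obtain ⟨I, hi, f1, m1, f2, m2⟩ := d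
  obtain ⟨I', hi', g1, n1, g2, n2⟩ := e
  simp only at hI h1 h2
  subst hI
  obtain rfl : f1 = g1 := Equiv.ext fun x => Subtype.ext (h1 x)
  obtain rfl : f2 = g2 := Equiv.ext fun y => Subtype.ext (h2 y)
  rfl

theorem EdgeGluing.ext' {d e : EdgeGluing P₁ P₂ P} (hΘ : d.Θ = e.Θ)
    (hφ : ∀ s, d.φ s = e.φ s) : d = e := by
  obtain ⟨T, c1, c2, f, m⟩ := d
  obtain ⟨T', c1', c2', g, m'⟩ := e
  simp only at hΘ hφ
  subst hΘ
  obtain rfl : f = g := Equiv.ext hφ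
  rfl

variable [Fintype P₁] [Fintype P₂] [Fintype P]

/-- The system of edges extracted from an ideal decomposition. -/
def decompTheta (d : IdealDecomp P₁ P₂ P) (x : P₁) : Set P₂ :=
  { y' | (d.φ₁ x : P) ≤ d.φ₂ y' ∧ (∀ z : P₂, (d.φ₁ x : P) ≤ d.φ₂ z → z ≤ y' → z = y')
    ∧ (∀ w : P₁, (d.φ₁ w : P) ≤ d.φ₂ y' → x ≤ w → w = x) }

theorem decomp_le_iff (d : IdealDecomp P₁ P₂ P) (x : P₁) (y : P₂) :
    (d.φ₁ x : P) ≤ d.φ₂ y ↔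
      ∃ x' : P₁, ∃ y' ∈ decompTheta d x', x ≤ x' ∧ y' ≤ y := by
  constructor
  · intro h
    -- pick y' minimal ≤ y with φ₁ x ≤ φ₂ y'
    obtain ⟨y', hy'le, hy'⟩ := Finite.exists_le_minimal (p := fun z => (d.φ₁ x : P) ≤ d.φ₂ z) h
    -- pick x' maximal ≥ x with φ₁ x' ≤ φ₂ y'
    obtain ⟨x', hxx', hx'⟩ := Finite.exists_le_maximal (p := fun w => (d.φ₁ w : P) ≤ d.φ₂ y') hy'.1
    refine ⟨x', y', ⟨hx'.1, ?_, ?_⟩, hxx', hy'le⟩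
    · intro z hz hzy'
      exact le_antisymm hzy' (hy'.2 (le_trans ((d.mono₁ x x').1 hxx') hz) hzy')
    · intro w hw hx'w
      exact le_antisymm (hx'.2 hw hx'w) hx'w
  · rintro ⟨x', y', ⟨h1, _, _⟩, hxx', hy'y⟩
    exact le_trans ((d.mono₁ x x').1 hxx') (le_trans h1 ((d.mono₂ y' y).1 hy'y))

open Classical in
/-- Forward map. -/
noncomputable def toGluing (d : IdealDecomp P₁ P₂ P) : EdgeGluing P₁ P₂ P where
  Θ := decompTheta d
  cond1 := by
    rintro x y hxy x' ⟨hx1, hx2, hx3⟩ y' ⟨hy1, hy2, hy3⟩ hle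
    have : (d.φ₁ y : P) ≤ d.φ₂ x' := le_trans hy1 ((d.mono₂ y' x').1 hle)
    exact hxy.ne' (hx3 y this hxy.le)
  cond2 := by
    rintro x x' ⟨hx1, hx2, hx3⟩ x'' ⟨hy1, hy2, hy3⟩
    constructor
    · intro h; exact (hy2 x' hx1 h)
    · rintro rfl; rfl
  φ :=
    { toFun := Sum.elim (fun x => (d.φ₁ x : P)) (fun y => (d.φ₂ y : P))
      invFun := fun p => if h : p ∈ d.I then .inr (d.φ₂.symm ⟨p, h⟩) else .inl (d.φ₁.symm ⟨p, h⟩)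
      left_inv := by
        rintro (x | y)
        · simp [dif_neg (d.φ₁ x).2]
        · simp [dif_pos (d.φ₂ y).2]
      right_inv := by
        intro p
        by_cases h : p ∈ d.I
        · simp [dif_pos h]
        · simp [dif_neg h] }
  mono := by
    rintro (x | x) (y | y)
    · exact d.mono₁ x y
    · simpa [gluedLE] using (decomp_le_iff d x y).symm
    · simp only [gluedLE, Equiv.coe_fn_mk, Sum.elim_inl, Sum.elim_inr, false_iff]
      intro h
      exact (d.φ₁ y).2 (d.ideal (d.φ₂ x).2 h)
    · exact d.mono₂ x y

/-- Backward map. -/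
def toDecomp (g : EdgeGluing P₁ P₂ P) : IdealDecomp P₁ P₂ P where
  I := { p | (g.φ.symm p).isRight }
  ideal := by
    intro a b ha hab
    simp only [Set.mem_setOf_eq] at ha ⊢
    by_contra hb
    have hle : gluedLE g.Θ (g.φ.symm a) (g.φ.symm b) := by
      rw [g.mono]
      simpa using hab
    obtain ⟨ya, hya⟩ := Sum.isRight_iff.1 ha
    obtain ⟨xb, hxb⟩ := Sum.isLeft_iff.1 (Sum.not_isRight.1 hb)
    rw [hya, hxb] at hle
    exact hle
  φ₁ :=
    { toFun := fun x => ⟨g.φ (.inl x), by simp [Set.mem_setOf_eq]⟩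
      invFun := fun p => (g.φ.symm p.1).getLeft (Sum.not_isRight.1 p.2)
      left_inv := by intro x; simp
      right_inv := by
        rintro ⟨p, hp⟩
        simp only [Subtype.mk.injEq]
        calc g.φ (Sum.inl ((g.φ.symm p).getLeft (Sum.not_isRight.1 hp)))
            = g.φ (g.φ.symm p) := congrArg g.φ (Sum.inl_getLeft _ _)
          _ = p := g.φ.apply_symm_apply p }
  mono₁ := fun a b => g.mono (.inl a) (.inl b)
  φ₂ :=
    { toFun := fun y => ⟨g.φ (.inr y), by simp [Set.mem_setOf_eq]⟩
      invFun := fun p => (g.φ.symm p.1).getRight p.2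
      left_inv := by intro y; simp
      right_inv := by
        rintro ⟨p, hp⟩
        simp only [Subtype.mk.injEq]
        calc g.φ (Sum.inr ((g.φ.symm p).getRight hp))
            = g.φ (g.φ.symm p) := congrArg g.φ (Sum.inr_getRight _ _)
          _ = p := g.φ.apply_symm_apply p }
  mono₂ := fun a b => g.mono (.inr a) (.inr b)

@[simp] theorem toDecomp_coe1 (g : EdgeGluing P₁ P₂ P) (x : P₁) :
    ((toDecomp g).φ₁ x : P) = g.φ (.inl x) := rfl

@[simp] theorem toDecomp_coe2 (g : EdgeGluing P₁ P₂ P) (y : P₂) :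
    ((toDecomp g).φ₂ y : P) = g.φ (.inr y) := rfl

theorem theta_eq (g : EdgeGluing P₁ P₂ P) : decompTheta (toDecomp g) = g.Θ := by
  have le_iff : ∀ (x : P₁) (y : P₂),
      g.φ (.inl x) ≤ g.φ (.inr y) ↔ ∃ x' : P₁, ∃ y' ∈ g.Θ x', x ≤ x' ∧ y' ≤ y := by
    intro x y
    exact (g.mono (.inl x) (.inr y)).symm
  funext x
  ext y'
  simp only [decompTheta, Set.mem_setOf_eq, toDecomp_coe1, toDecomp_coe2]
  constructor
  · rintro ⟨h1, h2, h3⟩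
    rw [le_iff] at h1
    obtain ⟨x'', z, hz, hxx'', hzy'⟩ := h1
    have hφ : g.φ (.inl x'') ≤ g.φ (.inr z) := by
      rw [← g.mono]
      exact ⟨x'', z, hz, le_refl _, le_refl _⟩
    have hx'' : x'' = x := by
      refine h3 x'' ?_ hxx''
      exact le_trans hφ ((g.mono (.inr z) (.inr y')).1 hzy')
    subst hx''
    have hz' : z = y' := by
      refine h2 z ?_ hzy'
      exact hφ
    subst hz'
    exact hz
  · intro hy'
    have h1 : g.φ (.inl x) ≤ g.φ (.inr y') := by
      rw [le_iff]; exact ⟨x, y', hy', le_refl _, le_refl _⟩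
    refine ⟨h1, ?_, ?_⟩
    · intro z hz hzy'
      rw [le_iff] at hz
      obtain ⟨x'', w, hw, hxx'', hwz⟩ := hz
      have hwy' : w ≤ y' := le_trans hwz hzy'
      rcases lt_or_eq_of_le hxx'' with hlt | rfl
      · exact absurd hwy' (g.cond1 x x'' hlt y' hy' w hw)
      · have : w = y' := (g.cond2 x w hw y' hy').1 hwy'
        subst this
        exact le_antisymm hzy' hwz
    · intro w hw hxw
      rw [le_iff] at hw
      obtain ⟨x'', u, hu, hwx'', huy'⟩ := hw
      have hxx'' : x ≤ x'' := le_trans hxw hwx''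
      rcases lt_or_eq_of_le hxx'' with hlt | rfl
      · exact absurd huy' (g.cond1 x x'' hlt y' hy' u hu)
      · exact le_antisymm hwx'' hxw

end IdealEdgeAux

open IdealEdgeAux in
theorem idealDecomp_equiv_edgeGluing (P₁ P₂ P : Type*)
    [Fintype P₁] [Fintype P₂] [Fintype P]
    [PartialOrder P₁] [PartialOrder P₂] [PartialOrder P] :
    Nonempty (IdealDecomp P₁ P₂ P ≃ EdgeGluing P₁ P₂ P) := by
  refine ⟨⟨toGluing, toDecomp, ?_, ?_⟩⟩
  · intro d
    refine IdealDecomp.ext' ?_ (fun x => rfl) (fun y => rfl)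
    ext p
    show ((toGluing d).φ.symm p).isRight ↔ p ∈ d.I
    simp only [toGluing, Equiv.coe_fn_symm_mk]
    by_cases h : p ∈ d.I
    · simp [dif_pos h, h]
    · simp [dif_neg h, h]
  · intro g
    refine EdgeGluing.ext' ?_ ?_
    · exact theta_eq g
    · rintro (x | y) <;> rfl
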